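/- Let d, n, ℓ ∈ ℕ, η > 0, X ∈ ℝ^{n×d} with rows x_1,…,x_n ∈ ℝ^d, y ∈ ℝ^n, and w_0,…,w_ℓ ∈ ℝ^d. Define V_GD, W_GD ∈ ℝ^{(2d+2)×(2d+2)} in block form (blocks of sizes d,1,d,1): V_GD is zero except for the block −η·I_d in rows d+2,…,2d+1 and columns 1,…,d; W_GD is zero except for the block I_d in rows 1,…,d and columns d+2,…,2d+1 and the entry −1 in row d+1, column 2d+2. Let H_ℓ ∈ ℝ^{(2d+2)×(n+ℓ+1)} be the matrix whose i-th column (i ≤ n) is (x_i, y_i, 0_d, 0)ᵀ and whose (n+1+j)-th column (0 ≤ j ≤ ℓ) is (0_d, 0, w_j, 1)ᵀ. Then the last column of TF(H_ℓ) := H_ℓ + V_GD · H_ℓ · (H_ℓᵀ W_GD H_ℓ)/n equals (0_d, 0, w_ℓ − (η/n)·Xᵀ(X w_ℓ − y), 1)ᵀ, i.e., the one-layer attention block with parameters (V_GD, W_GD) outputs one gradient-descent step on the least-squares loss at the last position. -/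

import Mathlib

/- STATEMENT 0: A one-layer linear self-attention block with parameters (V_GD, W_GD)
implements one gradient-descent step on the least-squares loss at the last position.
The embedding dimension 2d+2 is realized as the index type `(Fin d ⊕ Unit) ⊕ (Fin d ⊕ Unit)`
(blocks of sizes d, 1, d, 1), and the n+ℓ+1 columns as `Fin n ⊕ Fin (ℓ+1)`. -/

open Matrix

/-- Row/column index for the embedding dimension 2d+2, in blocks of sizes d, 1, d, 1. -/
abbrev EmbIdx (d : ℕ) := (Fin d ⊕ Unit) ⊕ (Fin d ⊕ Unit)

/-- The value matrix `V_GD`: zero except for the block `-η · I_d` in rows d+2,…,2d+1 and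
columns 1,…,d. -/
noncomputable def Vgd (d : ℕ) (η : ℝ) : Matrix (EmbIdx d) (EmbIdx d) ℝ := fun i j =>
  match i, j with
  | Sum.inr (Sum.inl a), Sum.inl (Sum.inl b) => if a = b then -η else 0
  | _, _ => 0

/-- The key-query matrix `W_GD`: zero except for the block `I_d` in rows 1,…,d and
columns d+2,…,2d+1 and the entry `-1` in row d+1, column 2d+2. -/
noncomputable def Wgd (d : ℕ) : Matrix (EmbIdx d) (EmbIdx d) ℝ := fun i j =>
  match i, j with
  | Sum.inl (Sum.inl a), Sum.inr (Sum.inl b) => if a = b then 1 else 0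
  | Sum.inl (Sum.inr _), Sum.inr (Sum.inr _) => -1
  | _, _ => 0

/-- The prompt matrix `H_ℓ`: the i-th column (i ≤ n) is (xᵢ, yᵢ, 0_d, 0)ᵀ and the
(n+1+j)-th column (0 ≤ j ≤ ℓ) is (0_d, 0, w_j, 1)ᵀ. -/
noncomputable def promptMat (d n ℓ : ℕ) (x : Fin n → Fin d → ℝ) (y : Fin n → ℝ)
    (w : Fin (ℓ + 1) → Fin d → ℝ) : Matrix (EmbIdx d) (Fin n ⊕ Fin (ℓ + 1)) ℝ := fun i c =>
  match c, i with
  | Sum.inl r, Sum.inl (Sum.inl a) => x r a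
  | Sum.inl r, Sum.inl (Sum.inr _) => y r
  | Sum.inl _, Sum.inr _ => 0
  | Sum.inr _, Sum.inl _ => 0
  | Sum.inr s, Sum.inr (Sum.inl a) => w s a
  | Sum.inr _, Sum.inr (Sum.inr _) => 1

/- The prompt's last column is h = (0, 0, w_ℓ, 1). The query-key product gives W h = (w_ℓ, -1, 0, 0),
so the last column of Hᵀ W H holds the residuals xᵢ·w_ℓ - yᵢ on the data columns and zeros on the
weight columns. Multiplying by H sums the data columns against these residuals, giving
(Xᵀ(Xw_ℓ - y), ·, 0, 0), and V_GD keeps only -η times the first block, moved to the w-block. -/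

/-- The vector `(u, t, v, r)` in the block decomposition `d, 1, d, 1` of `EmbIdx d`. -/
def embVec {d : ℕ} (u : Fin d → ℝ) (t : ℝ) (v : Fin d → ℝ) (r : ℝ) : EmbIdx d → ℝ :=
  Sum.elim (Sum.elim u fun _ => t) (Sum.elim v fun _ => r)

section EmbVec

variable {d : ℕ} (u : Fin d → ℝ) (t : ℝ) (v : Fin d → ℝ) (r : ℝ)

theorem Wgd_mulVec_embVec : Wgd d *ᵥ embVec u t v r = embVec v (-r) 0 0 := by
  ext ((a | _) | (a | _)) <;>
    simp [embVec, Wgd, mulVec, dotProduct, Fintype.sum_sum_type, ite_mul]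

theorem Vgd_mulVec_embVec (η : ℝ) : Vgd d η *ᵥ embVec u t v r = embVec 0 0 (-η • u) 0 := by
  ext ((a | _) | (a | _)) <;>
    simp [embVec, Vgd, mulVec, dotProduct, Fintype.sum_sum_type, ite_mul]

end EmbVec

section PromptMatrix

variable {d n ℓ : ℕ} (x : Fin n → Fin d → ℝ) (y : Fin n → ℝ) (w : Fin (ℓ + 1) → Fin d → ℝ)

theorem promptMat_col_inr (s : Fin (ℓ + 1)) :
    (fun i => promptMat d n ℓ x y w i (Sum.inr s)) = embVec 0 0 (w s) 1 := by
  ext ((a | _) | (a | _)) <;> rfl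

theorem promptMat_transpose_mulVec_embVec (u : Fin d → ℝ) (t : ℝ) (v : Fin d → ℝ) (r : ℝ) :
    (promptMat d n ℓ x y w)ᵀ *ᵥ embVec u t v r =
      Sum.elim (fun k => x k ⬝ᵥ u + y k * t) (fun j => w j ⬝ᵥ v + r) := by
  ext (k | j) <;> simp [embVec, promptMat, mulVec, dotProduct, Fintype.sum_sum_type]

theorem promptMat_mulVec_sumElim (p : Fin n → ℝ) (q : Fin (ℓ + 1) → ℝ) :
    promptMat d n ℓ x y w *ᵥ Sum.elim p q =
      embVec ((of x)ᵀ *ᵥ p) (y ⬝ᵥ p) ((of fun j => w j)ᵀ *ᵥ q) (∑ j, q j) := by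
  ext ((a | _) | (a | _)) <;>
    simp [embVec, promptMat, mulVec, dotProduct, Fintype.sum_sum_type, mul_comm]

end PromptMatrix

theorem linearAttention_apply {ι κ : Type*} [Fintype ι] [Fintype κ] (V W : Matrix ι ι ℝ)
    (H : Matrix ι κ ℝ) (a : ℝ) (i : ι) (c : κ) :
    (H + a • (V * H * (Hᵀ * W * H))) i c =
      H i c + a * (V *ᵥ H *ᵥ Hᵀ *ᵥ W *ᵥ fun j => H j c) i := by
  change H i c + a * ((V * H) *ᵥ ((Hᵀ * W) *ᵥ fun j => H j c)) i = _
  rw [← mulVec_mulVec, ← mulVec_mulVec]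

theorem stmt0 (d n ℓ : ℕ) (η : ℝ)
    (x : Fin n → Fin d → ℝ) (y : Fin n → ℝ) (w : Fin (ℓ + 1) → Fin d → ℝ) :
    ∀ i : EmbIdx d,
      (promptMat d n ℓ x y w +
        (n : ℝ)⁻¹ • (Vgd d η * promptMat d n ℓ x y w *
          ((promptMat d n ℓ x y w)ᵀ * Wgd d * promptMat d n ℓ x y w)))
        i (Sum.inr (Fin.last ℓ))
      = match i with
        | Sum.inl (Sum.inl _) => 0
        | Sum.inl (Sum.inr _) => 0
        | Sum.inr (Sum.inl a) =>
            (w (Fin.last ℓ) - (η / n) •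
              ((Matrix.of x)ᵀ.mulVec ((Matrix.of x).mulVec (w (Fin.last ℓ)) - y))) a
        | Sum.inr (Sum.inr _) => 1 := by
  intro i
  have hresidual : (promptMat d n ℓ x y w)ᵀ *ᵥ Wgd d *ᵥ embVec 0 0 (w (Fin.last ℓ)) 1 =
      Sum.elim (of x *ᵥ w (Fin.last ℓ) - y) 0 := by
    rw [Wgd_mulVec_embVec, promptMat_transpose_mulVec_embVec]
    ext (k | j) <;> simp [mulVec, sub_eq_add_neg]
  rw [linearAttention_apply, promptMat_col_inr, hresidual, promptMat_mulVec_sumElim,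
    Vgd_mulVec_embVec]
  rcases i with (a | _) | (a | _) <;>
    simp [embVec, promptMat, sub_eq_add_neg, div_eq_mul_inv, mul_assoc, mul_left_comm]
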